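/- arXiv:2208.03361 — 3 statements merged into one kernel-verified Lean document; each statement's English description precedes it below -/
import Mathlib

section
/- Every element of J_m with m ≥ 1 that lies in (0,1) belongs to S; that is, if t ∈ (0,1) is a wormhole height of some order m, then there exist C ≥ 1 and N ∈ ℕ such that C^{-1} ≤ D_n^+(t)/D_n^-(t) ≤ C for all n ≥ N. In particular S is nonempty. -/
open scoped ENNReal

/-- Wormhole heights of order `n` in Laakso space. -/
def Jset (n : ℕ) : Set ℝ :=
  {x | ∃ m : ℕ → ℕ, (∀ i, m i ≤ 2) ∧ 0 < m n ∧ x = ∑ i ∈ Finset.Icc 1 n, (m i : ℝ) / 3 ^ i}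

/-- `Dplus n t = inf {s > 0 : t + s ∈ J_n}`, with `inf ∅ = ∞`. -/
noncomputable def Dplus (n : ℕ) (t : ℝ) : ℝ≥0∞ :=
  ⨅ (s : ℝ) (_ : 0 < s ∧ t + s ∈ Jset n), ENNReal.ofReal s

/-- `Dminus n t = inf {s > 0 : t - s ∈ J_n}`, with `inf ∅ = ∞`. -/
noncomputable def Dminus (n : ℕ) (t : ℝ) : ℝ≥0∞ :=
  ⨅ (s : ℝ) (_ : 0 < s ∧ t - s ∈ Jset n), ENNReal.ofReal s

/-- Geometric sum: `∑_{i=m+1}^n 2/3^i = 3^{-m} - 3^{-n}`. -/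
private lemma geom_aux (m : ℕ) : ∀ n, m ≤ n →
    ∑ i ∈ Finset.Ioc m n, (2 : ℝ) / 3 ^ i = 1 / 3 ^ m - 1 / 3 ^ n := by
  intro n hn
  induction n with
  | zero =>
    interval_cases m
    simp
  | succ n ih =>
    rcases Nat.lt_or_ge m (n + 1) with h | h
    · have hmn : m ≤ n := Nat.lt_succ_iff.mp h
      rw [← Finset.Icc_add_one_left_eq_Ioc, Finset.sum_Icc_succ_top (by omega), Finset.Icc_add_one_left_eq_Ioc, ih hmn]
      have h3 : (0:ℝ) < 3 ^ n := by positivity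
      field_simp
      ring
    · have hmeq : m = n + 1 := le_antisymm hn h
      subst hmeq
      simp

/-- Every element of `Jset n` is an integer multiple of `3^{-n}`. -/
private lemma mem_J_int (n : ℕ) {x : ℝ} (hx : x ∈ Jset n) : ∃ k : ℤ, x = (k : ℝ) / 3 ^ n := by
  obtain ⟨d, _, _, rfl⟩ := hx
  refine ⟨∑ i ∈ Finset.Icc 1 n, (d i : ℤ) * 3 ^ (n - i), ?_⟩
  push_cast
  rw [Finset.sum_div]
  refine Finset.sum_congr rfl fun i hi => ?_
  have hin : i ≤ n := (Finset.mem_Icc.mp hi).2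
  rw [div_eq_div_iff (by positivity) (by positivity), mul_assoc, ← pow_add, Nat.sub_add_cancel hin]

/-- Every wormhole height `t ∈ (0,1)` of some order `m ≥ 1` belongs to `S`: there exist
`C ≥ 1` and `N` with `C⁻¹ ≤ D_n^+(t)/D_n^-(t) ≤ C` for all `n ≥ N`. In particular the
set `S` is nonempty. -/
theorem stmt4 (m : ℕ) (hm : 1 ≤ m) (t : ℝ) (ht : t ∈ Set.Ioo (0 : ℝ) 1) (htJ : t ∈ Jset m) :
    ∃ C : ℝ, 1 ≤ C ∧ ∃ N : ℕ, ∀ n, N ≤ n →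
      C⁻¹ ≤ (Dplus n t).toReal / (Dminus n t).toReal ∧
      (Dplus n t).toReal / (Dminus n t).toReal ≤ C := by
  obtain ⟨k, hk⟩ := mem_J_int m htJ
  obtain ⟨d, hd2, hdm, htd⟩ := htJ
  refine ⟨1, le_refl 1, m + 1, fun n hn => ?_⟩
  have hmn : m < n := hn
  -- t is an integer multiple of 3^{-n}
  have htk : t = ((k * 3 ^ (n - m) : ℤ) : ℝ) / 3 ^ n := by
    rw [hk]
    push_cast
    rw [div_eq_div_iff (by positivity) (by positivity), mul_assoc, ← pow_add, Nat.sub_add_cancel (le_of_lt hmn)]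
  -- membership of t + 3^{-n}
  have hplus : t + 1 / 3 ^ n ∈ Jset n := by
    refine ⟨fun i => if i = n then 1 else if i ≤ m then d i else 0, ?_, ?_, ?_⟩
    · intro i
      dsimp only
      split_ifs with h1 h2
      · norm_num
      · exact hd2 i
      · norm_num
    · simp
    · dsimp only
      simp only [Nat.cast_ite, Nat.cast_zero]
      have hsplit : ∀ i ∈ Finset.Icc 1 n,
          ((if i = n then (1:ℕ) else if i ≤ m then d i else 0) : ℝ) / 3 ^ i
            = ((if i ≤ m then (d i : ℝ) else 0)) / 3 ^ i + (if i = n then (1:ℝ) else 0) / 3 ^ i := by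
        intro i hi
        by_cases h1 : i = n
        · subst h1
          have h2 : ¬ i ≤ m := by omega
          simp [h2]
        · by_cases h2 : i ≤ m
          · simp [h1, h2]
          · simp [h1, h2]
      rw [Finset.sum_congr rfl hsplit, Finset.sum_add_distrib]
      have h1 : ∑ i ∈ Finset.Icc 1 n, (if i ≤ m then (d i : ℝ) else 0) / 3 ^ i = t := by
        rw [htd]
        rw [← Finset.sum_subset (Finset.Icc_subset_Icc_right (le_of_lt hmn))]
        · refine Finset.sum_congr rfl fun i hi => ?_
          have : i ≤ m := (Finset.mem_Icc.mp hi).2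
          simp [this]
        · intro i hi hni
          have h1 : 1 ≤ i := (Finset.mem_Icc.mp hi).1
          have h2 : i ≤ n := (Finset.mem_Icc.mp hi).2
          have : ¬ i ≤ m := by
            intro hle
            exact hni (Finset.mem_Icc.mpr ⟨h1, hle⟩)
          simp [this]
      have h2 : ∑ i ∈ Finset.Icc 1 n, (if i = n then (1:ℝ) else 0) / 3 ^ i = 1 / 3 ^ n := by
        rw [Finset.sum_congr rfl (fun i _ => by
          rw [show (if i = n then (1:ℝ) else 0) / 3 ^ i = (if i = n then (1:ℝ)/3^i else 0) from by split_ifs <;> simp])]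
        rw [Finset.sum_ite_eq' (Finset.Icc 1 n) n (fun i => (1:ℝ)/3^i)]
        simp [Finset.mem_Icc, Nat.one_le_iff_ne_zero.mpr (by omega : n ≠ 0)]
      rw [h1, h2]
  -- membership of t - 3^{-n}
  have hminus : t - 1 / 3 ^ n ∈ Jset n := by
    refine ⟨fun i => if i ≤ m then (if i = m then d m - 1 else d i) else if i ≤ n then 2 else 0,
      ?_, ?_, ?_⟩
    · intro i
      dsimp only
      split_ifs with h1 h2
      · have := hd2 m; omega
      · exact hd2 i
      · norm_num
      · norm_num
    · have h1 : ¬ n ≤ m := by omega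
      simp [h1]
    · dsimp only
      have hc' : ((d m - 1 : ℕ) : ℝ) = (d m : ℝ) - 1 := by
        have h1 : 1 ≤ d m := hdm
        push_cast [h1]
        ring
      simp only [Nat.cast_ite, Nat.cast_zero, Nat.cast_ofNat, hc']
      have hsplit : ∀ i ∈ Finset.Icc 1 n,
          ((if i ≤ m then (if i = m then d m - 1 else d i) else if i ≤ n then 2 else 0) : ℝ) / 3 ^ i
            = (if i ≤ m then ((if i = m then (d m : ℝ) - 1 else d i)) else 0) / 3 ^ i
              + (if m < i then (2:ℝ) else 0) / 3 ^ i := by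
        intro i hi
        have hin : i ≤ n := (Finset.mem_Icc.mp hi).2
        have hc : ((d m - 1 : ℕ) : ℝ) = (d m : ℝ) - 1 := by
          have h1 : 1 ≤ d m := hdm
          push_cast [h1]
          ring
        by_cases h1 : i ≤ m
        · have hnm : ¬ m < i := by omega
          by_cases h2 : i = m
          · simp [h1, h2, hnm, hc]
          · simp [h1, h2, hnm]
        · have hmi : m < i := by omega
          simp [h1, hin, hmi]
      rw [Finset.sum_congr rfl hsplit, Finset.sum_add_distrib]
      have h1 : ∑ i ∈ Finset.Icc 1 n,
          (if i ≤ m then ((if i = m then (d m : ℝ) - 1 else d i)) else 0) / 3 ^ i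
            = t - 1 / 3 ^ m := by
        rw [← Finset.sum_subset (Finset.Icc_subset_Icc_right (le_of_lt hmn))
          (by
            intro i hi hni
            have h1 : 1 ≤ i := (Finset.mem_Icc.mp hi).1
            have h2 : i ≤ n := (Finset.mem_Icc.mp hi).2
            have : ¬ i ≤ m := fun hle => hni (Finset.mem_Icc.mpr ⟨h1, hle⟩)
            simp [this])]
        have : ∀ i ∈ Finset.Icc 1 m,
            (if i ≤ m then ((if i = m then (d m : ℝ) - 1 else d i)) else 0) / 3 ^ i
              = (d i : ℝ) / 3 ^ i + (if i = m then (-1 : ℝ) / 3 ^ m else 0) := by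
          intro i hi
          have h1 : i ≤ m := (Finset.mem_Icc.mp hi).2
          by_cases h2 : i = m
          · subst h2
            simp [h1]
            ring
          · simp [h1, h2]
        rw [Finset.sum_congr rfl this, Finset.sum_add_distrib, ← htd,
          Finset.sum_ite_eq' (Finset.Icc 1 m) m (fun _ => (-1:ℝ)/3^m)]
        have hmem : m ∈ Finset.Icc 1 m := Finset.mem_Icc.mpr ⟨hm, le_refl m⟩
        simp [hmem]
        ring
      have h2 : ∑ i ∈ Finset.Icc 1 n, (if m < i then (2:ℝ) else 0) / 3 ^ i
          = 1 / 3 ^ m - 1 / 3 ^ n := by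
        rw [← geom_aux m n (le_of_lt hmn)]
        rw [← Finset.sum_subset (show Finset.Ioc m n ⊆ Finset.Icc 1 n from by
            intro i hi
            have := Finset.mem_Ioc.mp hi
            exact Finset.mem_Icc.mpr ⟨by omega, this.2⟩)
          (by
            intro i hi hni
            have h1 : 1 ≤ i := (Finset.mem_Icc.mp hi).1
            have h2 : i ≤ n := (Finset.mem_Icc.mp hi).2
            have : ¬ m < i := fun hlt => hni (Finset.mem_Ioc.mpr ⟨hlt, h2⟩)
            simp [this])]
        refine Finset.sum_congr rfl fun i hi => ?_
        have : m < i := (Finset.mem_Ioc.mp hi).1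
        simp [this]
      rw [h1, h2]
      ring
  -- lower bounds: any admissible s is at least 3^{-n}
  have hlbp : ∀ s : ℝ, (0 < s ∧ t + s ∈ Jset n) → 1 / 3 ^ n ≤ s := by
    rintro s ⟨hs, hsJ⟩
    obtain ⟨k', hk'⟩ := mem_J_int n hsJ
    have hseq : s = ((k' - k * 3 ^ (n - m) : ℤ) : ℝ) / 3 ^ n := by
      have : s = (t + s) - t := by ring
      rw [this, hk', htk]
      push_cast
      ring
    have hKpos : (0 : ℝ) < ((k' - k * 3 ^ (n - m) : ℤ) : ℝ) := by
      by_contra hle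
      push_neg at hle
      have : s ≤ 0 := by
        rw [hseq]
        exact div_nonpos_of_nonpos_of_nonneg hle (by positivity)
      linarith
    have hK0 : (0 : ℤ) < k' - k * 3 ^ (n - m) := by exact_mod_cast hKpos
    have hK1 : (1 : ℝ) ≤ ((k' - k * 3 ^ (n - m) : ℤ) : ℝ) := by
      have : (1 : ℤ) ≤ k' - k * 3 ^ (n - m) := by omega
      exact_mod_cast this
    rw [hseq]
    gcongr
  have hlbm : ∀ s : ℝ, (0 < s ∧ t - s ∈ Jset n) → 1 / 3 ^ n ≤ s := by
    rintro s ⟨hs, hsJ⟩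
    obtain ⟨k', hk'⟩ := mem_J_int n hsJ
    have hseq : s = ((k * 3 ^ (n - m) - k' : ℤ) : ℝ) / 3 ^ n := by
      have : s = t - (t - s) := by ring
      rw [this, hk', htk]
      push_cast
      ring
    have hKpos : (0 : ℝ) < ((k * 3 ^ (n - m) - k' : ℤ) : ℝ) := by
      by_contra hle
      push_neg at hle
      have : s ≤ 0 := by
        rw [hseq]
        exact div_nonpos_of_nonpos_of_nonneg hle (by positivity)
      linarith
    have hK0 : (0 : ℤ) < k * 3 ^ (n - m) - k' := by exact_mod_cast hKpos
    have hK1 : (1 : ℝ) ≤ ((k * 3 ^ (n - m) - k' : ℤ) : ℝ) := by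
      have : (1 : ℤ) ≤ k * 3 ^ (n - m) - k' := by omega
      exact_mod_cast this
    rw [hseq]
    gcongr
  -- compute the infima
  have hDp : Dplus n t = ENNReal.ofReal (1 / 3 ^ n) := by
    apply le_antisymm
    · exact iInf₂_le (1 / 3 ^ n : ℝ) ⟨by positivity, hplus⟩
    · exact le_iInf₂ fun s hs => ENNReal.ofReal_le_ofReal (hlbp s hs)
  have hDm : Dminus n t = ENNReal.ofReal (1 / 3 ^ n) := by
    apply le_antisymm
    · exact iInf₂_le (1 / 3 ^ n : ℝ) ⟨by positivity, hminus⟩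
    · exact le_iInf₂ fun s hs => ENNReal.ofReal_le_ofReal (hlbm s hs)
  have hpos : (0:ℝ) < 1 / 3 ^ n := by positivity
  have hratio : (Dplus n t).toReal / (Dminus n t).toReal = 1 := by
    rw [hDp, hDm, ENNReal.toReal_ofReal hpos.le, div_self hpos.ne']
  rw [hratio]
  norm_num
end

section
/- Fix a rational C > 1 and N ∈ ℕ, and let S_{C,N} := {t ∈ (0,1) : D_n^+(t), D_n^-(t) < ∞ and C^{-1} ≤ D_n^+(t)/D_n^-(t) ≤ C for all n ≥ N}. Let 0 < λ < 1/2 satisfy (1-λ)/λ > C. Then for every n ≥ N and every t ∈ J_n, the interval (t, t + λ/3^n) is disjoint from S_{C,N}. -/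
open scoped ENNReal

lemma jn_int (n : ℕ) (x : ℝ) (hx : x ∈ Jset n) : ∃ z : ℕ, x = z / 3 ^ n := by
  obtain ⟨m, hm2, hmn, rfl⟩ := hx
  refine ⟨∑ i ∈ Finset.Icc 1 n, m i * 3 ^ (n - i), ?_⟩
  push_cast
  rw [Finset.sum_div]
  refine Finset.sum_congr rfl fun i hi => ?_
  have hi' : i ≤ n := (Finset.mem_Icc.mp hi).2
  have h3n : (3 : ℝ) ^ n = 3 ^ i * 3 ^ (n - i) := by
    rw [← pow_add]; congr 1; omega
  rw [h3n]
  field_simp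

lemma jn_sep (n : ℕ) {x y : ℝ} (hx : x ∈ Jset n) (hy : y ∈ Jset n) (h : x < y) :
    x + 1 / 3 ^ n ≤ y := by
  obtain ⟨a, rfl⟩ := jn_int n x hx
  obtain ⟨b, rfl⟩ := jn_int n y hy
  have h3 : (0 : ℝ) < 3 ^ n := by positivity
  have hab' : (a : ℝ) + 1 ≤ b := by
    have h' := mul_lt_mul_of_pos_right h h3
    rw [div_mul_cancel₀ _ h3.ne', div_mul_cancel₀ _ h3.ne'] at h'
    have hab : a < b := by exact_mod_cast h'
    exact_mod_cast hab
  rw [show (a : ℝ) / 3 ^ n + 1 / 3 ^ n = ((a : ℝ) + 1) / 3 ^ n by ring]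
  gcongr

/-- For rational `C > 1`, `N ∈ ℕ`, and `0 < λ < 1/2` with `(1-λ)/λ > C`: for every
`n ≥ N` and every `t ∈ J_n`, the interval `(t, t + λ/3^n)` is disjoint from
`S_{C,N} = {t ∈ (0,1) : D_n^±(t) < ∞ and C⁻¹ ≤ D_n^+(t)/D_n^-(t) ≤ C for all n ≥ N}`. -/
theorem stmt5 (C : ℚ) (hC : 1 < C) (N : ℕ) (lam : ℝ) (hlam0 : 0 < lam)
    (hlam1 : lam < 1 / 2) (hlamC : (C : ℝ) < (1 - lam) / lam)
    (n : ℕ) (hnN : N ≤ n) (hn1 : 1 ≤ n) (t : ℝ) (htJ : t ∈ Jset n) :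
    Set.Ioo t (t + lam / 3 ^ n) ∩
      {s : ℝ | s ∈ Set.Ioo (0 : ℝ) 1 ∧ ∀ k, N ≤ k →
        Dplus k s ≠ ⊤ ∧ Dminus k s ≠ ⊤ ∧
        (C : ℝ)⁻¹ ≤ (Dplus k s).toReal / (Dminus k s).toReal ∧
        (Dplus k s).toReal / (Dminus k s).toReal ≤ (C : ℝ)} = ∅ := by
  rw [Set.eq_empty_iff_forall_notMem]
  rintro s ⟨hs1, hs2, hall⟩
  obtain ⟨hDp, hDm, hlo, hhi⟩ := hall n hnN
  have h3 : (0 : ℝ) < 3 ^ n := by positivity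
  have hts : t < s := hs1.1
  have hst : s - t < lam / 3 ^ n := by
    have := hs1.2; linarith
  have hDm_le : Dminus n s ≤ ENNReal.ofReal (s - t) := by
    refine iInf_le_of_le (s - t) (iInf_le_of_le ⟨by linarith, ?_⟩ le_rfl)
    rw [sub_sub_cancel]; exact htJ
  have hDp_ge : ENNReal.ofReal (t + 1 / 3 ^ n - s) ≤ Dplus n s := by
    refine le_iInf fun s' => le_iInf fun hs' => ?_
    obtain ⟨hs'0, hs'J⟩ := hs'
    have hsep : t + 1 / 3 ^ n ≤ s + s' := jn_sep n htJ hs'J (by linarith)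
    exact ENNReal.ofReal_le_ofReal (by linarith)
  have hb : (Dminus n s).toReal ≤ s - t :=
    ENNReal.toReal_le_of_le_ofReal (by linarith) hDm_le
  have hlamlt1 : lam / 3 ^ n < 1 / 3 ^ n := by
    gcongr
    · linarith
  have ha : t + 1 / 3 ^ n - s ≤ (Dplus n s).toReal := by
    have h1 := ENNReal.toReal_mono hDp hDp_ge
    rwa [ENNReal.toReal_ofReal (by linarith)] at h1
  have ha0 : (1 - lam) / 3 ^ n < (Dplus n s).toReal := by
    have : (1 - lam) / 3 ^ n = 1 / 3 ^ n - lam / 3 ^ n := by ring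
    linarith
  have hpos : (0 : ℝ) < (1 - lam) / 3 ^ n := by
    apply div_pos (by linarith) h3
  have hb0 : 0 ≤ (Dminus n s).toReal := ENNReal.toReal_nonneg
  have hC0 : (0 : ℝ) < (C : ℝ) := by exact_mod_cast hC.trans' (by norm_num)
  rcases eq_or_lt_of_le hb0 with hb' | hb'
  · rw [← hb', div_zero] at hlo
    have : (0 : ℝ) < (C : ℝ)⁻¹ := inv_pos.mpr hC0
    linarith
  · have h1 : (C : ℝ) * lam < 1 - lam := (lt_div_iff₀ hlam0).mp hlamC
    have h2 : (Dplus n s).toReal ≤ (C : ℝ) * (Dminus n s).toReal :=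
      (div_le_iff₀ hb').mp hhi
    have h3' : (C : ℝ) * (Dminus n s).toReal ≤ (C : ℝ) * (s - t) :=
      mul_le_mul_of_nonneg_left hb hC0.le
    have h4 : (C : ℝ) * (lam / 3 ^ n) < (1 - lam) / 3 ^ n := by
      rw [mul_div_assoc']
      gcongr
    linarith [mul_lt_mul_of_pos_left hst hC0]
end

section
/- The set S := {t ∈ (0,1) : ∃ C ≥ 1, N ∈ ℕ, ∀ n ≥ N, C^{-1} ≤ D_n^+(t)/D_n^-(t) ≤ C} is σ-porous in the interval I = [0,1] with the Euclidean metric; in particular S is meager and has Lebesgue measure zero. -/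
open scoped ENNReal

/-- A set `P` in a metric space is porous if there is `0 < ρ < 1` such that every `x ∈ P`
and every `δ > 0` admit a point `y ≠ x` with `dist y x < δ` whose ball
`B(y, ρ · dist y x)` misses `P`. -/
def Porous {X : Type*} [MetricSpace X] (P : Set X) : Prop :=
  ∃ ρ : ℝ, 0 < ρ ∧ ρ < 1 ∧ ∀ x ∈ P, ∀ δ > (0 : ℝ), ∃ y : X, y ≠ x ∧ dist y x < δ ∧
    Metric.ball y (ρ * dist y x) ∩ P = ∅

/-- A set is σ-porous if it is a countable union of porous sets. -/
def SigmaPorous {X : Type*} [MetricSpace X] (P : Set X) : Prop :=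
  ∃ f : ℕ → Set X, (∀ n, Porous (f n)) ∧ P = ⋃ n, f n

/-- The condition defining the set `S ⊆ (0,1)`. -/
def Scond (t : ℝ) : Prop :=
  t ∈ Set.Ioo (0 : ℝ) 1 ∧ ∃ C : ℝ, 1 ≤ C ∧ ∃ N : ℕ, ∀ n, N ≤ n →
    C⁻¹ ≤ (Dplus n t).toReal / (Dminus n t).toReal ∧
    (Dplus n t).toReal / (Dminus n t).toReal ≤ C

/-!
Points of `J_n` lie on the grid `3⁻ⁿℕ`, and every grid point `a / 3ⁿ ∈ (0, 1)` with `3 ∤ a`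
belongs to `J_n`. Just to the right of such a point `j`, for `t ∈ (j, j + 3⁻ⁿ / (1 + C))`,
we have `D_n^-(t) ≤ t - j` while `D_n^+(t) ≥ j + 3⁻ⁿ - t > C (t - j)`, so the ratio bound
with constant `C` fails at level `n`. Such points `j` lie within `2 · 3⁻ⁿ` to the right of
any `x`, and `n` can be taken arbitrarily large, so the set of `t` obeying the bound with a
fixed `C` from a fixed level on is porous, with `ρ = 1 / (6 (1 + C))`. `S` is the union of
countably many such sets. Porous sets are nowhere dense and, by the Lebesgue density theorem,
null.
-/

open Set Metric Filter Topology MeasureTheory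

section Porous

variable {X : Type*} [MetricSpace X]

theorem Porous.isNowhereDense {P : Set X} (hP : Porous P) : IsNowhereDense P := by
  obtain ⟨ρ, hρ, -, hP⟩ := hP
  refine isNowhereDense_iff_forall_notMem_nhds.mpr fun x hx hcl => ?_
  obtain ⟨r, hr, hball⟩ := Metric.mem_nhds_iff.mp hcl
  obtain ⟨y, hyx, hyr, hy⟩ := hP x hx r hr
  obtain ⟨z, hzP, hyz⟩ :=
    Metric.mem_closure_iff.mp (hball hyr) _ (mul_pos hρ (dist_pos.mpr hyx))
  exact eq_empty_iff_forall_notMem.mp hy z ⟨mem_ball'.mpr hyz, hzP⟩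

theorem SigmaPorous.isMeagre {P : Set X} (hP : SigmaPorous P) : IsMeagre P := by
  obtain ⟨f, hf, rfl⟩ := hP
  exact isMeagre_iUnion fun n => (hf n).isNowhereDense.isMeagre

theorem sigmaPorous_iUnion {ι : Type*} [Countable ι] [Nonempty ι] {f : ι → Set X}
    (hf : ∀ i, Porous (f i)) : SigmaPorous (⋃ i, f i) := by
  obtain ⟨e, he⟩ := exists_surjective_nat ι
  exact ⟨f ∘ e, fun n => hf (e n), (he.iUnion_comp f).symm⟩

theorem porous_preimage_val {s P : Set X} {ρ : ℝ} (hρ₀ : 0 < ρ) (hρ₁ : ρ < 1)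
    (hP : ∀ x ∈ P, ∀ δ > (0 : ℝ), ∃ y ∈ s, y ≠ x ∧ dist y x < δ ∧ ball y (ρ * dist y x) ∩ P = ∅) :
    Porous (((↑) : s → X) ⁻¹' P) := by
  refine ⟨ρ, hρ₀, hρ₁, fun x hx δ hδ => ?_⟩
  obtain ⟨y, hys, hyx, hyδ, hy⟩ := hP x hx δ hδ
  exact ⟨⟨y, hys⟩, fun h => hyx (congrArg Subtype.val h), hyδ,
    eq_empty_iff_forall_notMem.mpr fun t ht => eq_empty_iff_forall_notMem.mp hy t ht⟩

end Porous

theorem volume_inter_closedBall_le {P : Set ℝ} {x y ρ : ℝ} (hρ : 0 ≤ ρ)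
    (hy : ball y (ρ * dist y x) ∩ P = ∅) :
    volume (P ∩ closedBall x ((1 + ρ) * dist y x)) ≤
      ENNReal.ofReal (1 + ρ)⁻¹ * volume (closedBall x ((1 + ρ) * dist y x)) := by
  set d := dist y x
  have hd : 0 ≤ d := dist_nonneg
  have hball : ball y (ρ * d) ⊆ closedBall x ((1 + ρ) * d) := fun t ht => by
    rw [mem_ball] at ht
    rw [mem_closedBall]
    linarith [dist_triangle t y x]
  have hcap : P ∩ closedBall x ((1 + ρ) * d) ⊆ closedBall x ((1 + ρ) * d) \ ball y (ρ * d) :=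
    fun t ⟨htP, htb⟩ => ⟨htb, fun ht => eq_empty_iff_forall_notMem.mp hy t ⟨ht, htP⟩⟩
  calc volume (P ∩ closedBall x ((1 + ρ) * d))
      ≤ volume (closedBall x ((1 + ρ) * d) \ ball y (ρ * d)) := measure_mono hcap
    _ = ENNReal.ofReal (2 * ((1 + ρ) * d)) - ENNReal.ofReal (2 * (ρ * d)) := by
      rw [measure_sdiff hball measurableSet_ball.nullMeasurableSet measure_ball_lt_top.ne,
        Real.volume_closedBall, Real.volume_ball]
    _ = ENNReal.ofReal (1 + ρ)⁻¹ * ENNReal.ofReal (2 * ((1 + ρ) * d)) := by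
      rw [← ENNReal.ofReal_sub _ (by positivity), ← ENNReal.ofReal_mul (by positivity)]
      congr 1
      field_simp
      ring
    _ = _ := by rw [Real.volume_closedBall]

theorem Porous.volume_eq_zero {P : Set ℝ} (hP : Porous P) : volume P = 0 := by
  obtain ⟨ρ, hρ, -, hP⟩ := hP
  set density : ℝ → ℝ → ℝ≥0∞ := fun x r => volume (P ∩ closedBall x r) / volume (closedBall x r)
  have hlt : ENNReal.ofReal (1 + ρ)⁻¹ < 1 := by
    rw [ENNReal.ofReal_lt_one]
    exact inv_lt_one_of_one_lt₀ (by linarith)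
  have hnot : ∀ x ∈ P, ¬ Tendsto (density x) (𝓝[>] 0) (𝓝 1) := by
    intro x hx htend
    obtain ⟨u, hu : 0 < u, hdens⟩ := mem_nhdsGT_iff_exists_Ioo_subset.mp
      (htend.eventually (eventually_gt_nhds hlt))
    obtain ⟨y, hyx, hyu, hy⟩ := hP x hx (u / (1 + ρ)) (by positivity)
    have hr : (1 + ρ) * dist y x ∈ Ioo 0 u :=
      ⟨mul_pos (by positivity) (dist_pos.mpr hyx), by rwa [lt_div_iff₀' (by positivity)] at hyu⟩
    exact (hdens hr).not_ge (ENNReal.div_le_of_le_mul (volume_inter_closedBall_le hρ.le hy))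
  rw [← Measure.restrict_apply_self]
  exact measure_mono_null hnot (ae_iff.mp (Besicovitch.ae_tendsto_measure_inter_div volume P))

theorem Nat.sum_range_div_pow_mod_mul_pow (a b n : ℕ) :
    ∑ j ∈ Finset.range n, a / b ^ j % b * b ^ j = a % b ^ n := by
  induction n with
  | zero => simp [Nat.mod_one]
  | succ n ih => rw [Finset.sum_range_succ, ih, Nat.mod_pow_succ, mul_comm (b ^ n)]

theorem sum_Icc_div_three_pow (n : ℕ) (m : ℕ → ℕ) :
    ∑ i ∈ Finset.Icc 1 n, (m i : ℝ) / 3 ^ i =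
      ((∑ i ∈ Finset.Icc 1 n, m i * 3 ^ (n - i) : ℕ) : ℝ) / 3 ^ n := by
  push_cast
  rw [Finset.sum_div]
  refine Finset.sum_congr rfl fun i hi => ?_
  rw [pow_sub₀ _ three_ne_zero (Finset.mem_Icc.mp hi).2]
  field_simp

theorem exists_nat_eq_div_of_mem_Jset {n : ℕ} {x : ℝ} (hx : x ∈ Jset n) :
    ∃ z : ℕ, x = z / 3 ^ n := by
  obtain ⟨m, -, -, rfl⟩ := hx
  exact ⟨_, sum_Icc_div_three_pow n m⟩

theorem natCast_div_mem_Jset {n a : ℕ} (ha : a < 3 ^ n) (h3 : ¬ 3 ∣ a) :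
    (a : ℝ) / 3 ^ n ∈ Jset n := by
  refine ⟨fun i => a / 3 ^ (n - i) % 3, fun i => Nat.le_of_lt_succ (Nat.mod_lt _ three_pos),
    by simpa [Nat.pos_iff_ne_zero, Nat.dvd_iff_mod_eq_zero] using h3, ?_⟩
  have hreflect : ∑ i ∈ Finset.Icc 1 n, a / 3 ^ (n - i) % 3 * 3 ^ (n - i) =
      ∑ j ∈ Finset.range n, a / 3 ^ j % 3 * 3 ^ j := by
    refine Finset.sum_nbij' (n - ·) (n - ·) ?_ ?_ ?_ ?_ fun i _ => rfl <;>
      intro i hi <;> grind [Finset.coe_Icc, Finset.coe_range]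
  rw [sum_Icc_div_three_pow, hreflect, Nat.sum_range_div_pow_mod_mul_pow, Nat.mod_eq_of_lt ha]

theorem exists_mem_Jset_near {x : ℝ} {m : ℕ} (hx : 0 ≤ x) (hxm : x + 3 / 3 ^ m ≤ 1) :
    ∃ a : ℕ, (a : ℝ) / 3 ^ m ∈ Jset m ∧ x < a / 3 ^ m ∧ (a + 1) / 3 ^ m ≤ x + 3 / 3 ^ m := by
  have hpos : (0 : ℝ) < 3 ^ m := by positivity
  set b := ⌊3 ^ m * x⌋₊
  have hb : (b : ℝ) ≤ 3 ^ m * x := Nat.floor_le (by positivity)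
  have hb' : 3 ^ m * x < b + 1 := Nat.lt_floor_add_one _
  obtain ⟨a, hba, hab, ha3⟩ : ∃ a, b < a ∧ a ≤ b + 2 ∧ ¬ 3 ∣ a := by
    by_cases h : 3 ∣ b + 1
    exacts [⟨b + 2, by omega, le_rfl, by omega⟩, ⟨b + 1, by omega, by omega, h⟩]
  have hba' : (b : ℝ) + 1 ≤ a := by exact_mod_cast hba
  have hab' : (a : ℝ) ≤ b + 2 := by exact_mod_cast hab
  have hxm' : 3 ^ m * x + 3 ≤ 3 ^ m := by
    field_simp at hxm
    linarith
  have ha : a < 3 ^ m := by exact_mod_cast (by linarith : (a : ℝ) < 3 ^ m)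
  refine ⟨a, natCast_div_mem_Jset ha ha3, by rw [lt_div_iff₀ hpos]; linarith, ?_⟩
  rw [div_le_iff₀ hpos, add_mul, div_mul_cancel₀ _ hpos.ne']
  linarith

theorem Dminus_le_ofReal {n : ℕ} {t s : ℝ} (hs : 0 < s) (h : t - s ∈ Jset n) :
    Dminus n t ≤ ENNReal.ofReal s :=
  iInf₂_le s ⟨hs, h⟩

theorem ofReal_le_Dplus {n a : ℕ} {t : ℝ} (ht : (a : ℝ) / 3 ^ n < t) :
    ENNReal.ofReal ((a + 1) / 3 ^ n - t) ≤ Dplus n t := by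
  refine le_iInf₂ fun s ⟨hs, hJ⟩ => ENNReal.ofReal_le_ofReal ?_
  obtain ⟨z, hz⟩ := exists_nat_eq_div_of_mem_Jset hJ
  have hpos : (0 : ℝ) < 3 ^ n := by positivity
  have haz : (a : ℝ) < z := (div_lt_div_iff_of_pos_right hpos).mp (hz ▸ by linarith)
  have haz' : (a : ℝ) + 1 ≤ z := by exact_mod_cast (Nat.cast_lt.mp haz : a < z)
  linarith [div_le_div_of_nonneg_right haz' hpos.le]

theorem pos_and_le_mul_of_inv_le_div_le {p q C : ℝ} (hp : 0 ≤ p) (hq : 0 ≤ q) (hC : 0 < C)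
    (h₁ : C⁻¹ ≤ p / q) (h₂ : p / q ≤ C) : 0 < p ∧ p ≤ C * q := by
  have hpq : 0 < p / q := (inv_pos.mpr hC).trans_le h₁
  have hq' : 0 < q := hq.lt_of_ne fun h => by simp [← h] at hpq
  exact ⟨hp.lt_of_ne fun h => by simp [← h] at hpq, (div_le_iff₀ hq').mp h₂⟩

theorem not_inv_le_div_le_of_near_Jset {C t : ℝ} {n a : ℕ} (hC : 0 < C)
    (hJ : (a : ℝ) / 3 ^ n ∈ Jset n) (ht : (a : ℝ) / 3 ^ n < t)
    (htC : (1 + C) * (t - a / 3 ^ n) < 1 / 3 ^ n) :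
    ¬ (C⁻¹ ≤ (Dplus n t).toReal / (Dminus n t).toReal ∧
      (Dplus n t).toReal / (Dminus n t).toReal ≤ C) := by
  rintro ⟨h₁, h₂⟩
  -- the lower bound excludes the junk values `∞.toReal = 0` and `p / 0 = 0`
  obtain ⟨hplus_pos, hle⟩ :=
    pos_and_le_mul_of_inv_le_div_le ENNReal.toReal_nonneg ENNReal.toReal_nonneg hC h₁ h₂
  have hminus : (Dminus n t).toReal ≤ t - a / 3 ^ n :=
    ENNReal.toReal_le_of_le_ofReal (by linarith)
      (Dminus_le_ofReal (sub_pos.mpr ht) (by rwa [sub_sub_cancel]))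
  have hplus : (a + 1) / 3 ^ n - t ≤ (Dplus n t).toReal :=
    (ENNReal.ofReal_le_iff_le_toReal (ENNReal.toReal_pos_iff.mp hplus_pos).2.ne).mp
      (ofReal_le_Dplus ht)
  rw [add_div] at hplus
  linarith [mul_le_mul_of_nonneg_left hminus hC.le]

def ratioBoundedSet (C : ℝ) (N : ℕ) : Set ℝ :=
  {t | t ∈ Ioo 0 1 ∧ ∀ n, N ≤ n →
    C⁻¹ ≤ (Dplus n t).toReal / (Dminus n t).toReal ∧
    (Dplus n t).toReal / (Dminus n t).toReal ≤ C}

theorem setOf_Scond_eq_iUnion :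
    {t | Scond t} = ⋃ p : ℕ × ℕ, ratioBoundedSet (p.1 + 1) p.2 := by
  ext t
  simp only [mem_iUnion, Prod.exists]
  change Scond t ↔ _
  constructor
  · rintro ⟨ht, C, hC, N, hN⟩
    have hCk : C ≤ ⌈C⌉₊ + 1 := by linarith [Nat.le_ceil C]
    refine ⟨⌈C⌉₊, N, ht, fun n hn => ?_⟩
    obtain ⟨h₁, h₂⟩ := hN n hn
    exact ⟨(inv_anti₀ (by linarith) hCk).trans h₁, h₂.trans hCk⟩
  · rintro ⟨k, N, ht, hN⟩
    exact ⟨ht, k + 1, by simp, N, hN⟩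

theorem ratioBoundedSet_hole {C : ℝ} (hC : 0 < C) (N : ℕ) :
    ∀ x ∈ ratioBoundedSet C N, ∀ δ > (0 : ℝ), ∃ y ∈ Icc (0 : ℝ) 1, y ≠ x ∧ dist y x < δ ∧
      ball y ((6 * (1 + C))⁻¹ * dist y x) ∩ ratioBoundedSet C N = ∅ := by
  intro x hx δ hδ
  have hsmall : Tendsto (fun m : ℕ => (3 : ℝ) / 3 ^ m) atTop (𝓝 0) :=
    tendsto_const_nhds.div_atTop (tendsto_pow_atTop_atTop_of_one_lt (by norm_num))
  obtain ⟨m, hm, hmN⟩ : ∃ m, 3 / 3 ^ m < min δ (1 - x) ∧ N ≤ m :=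
    ((hsmall.eventually (gt_mem_nhds (lt_min hδ (sub_pos.mpr hx.1.2)))).and
      (eventually_ge_atTop N)).exists
  have hmδ : 3 / 3 ^ m < δ := hm.trans_le (min_le_left _ _)
  have hm1 : 3 / 3 ^ m < 1 - x := hm.trans_le (min_le_right _ _)
  obtain ⟨a, hJ, hxa, hag⟩ := exists_mem_Jset_near hx.1.1.le (le_sub_iff_add_le'.mp hm1.le)
  set j := (a : ℝ) / 3 ^ m
  set g := (1 : ℝ) / 3 ^ m
  have hg : 0 < g := by positivity
  have h3g : 3 / 3 ^ m = 3 * g := by ring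
  rw [add_div, h3g] at hag
  rw [h3g] at hmδ hm1
  obtain ⟨ε, hε, hεg⟩ : ∃ ε : ℝ, 0 < ε ∧ 2 * (1 + C) * ε = g :=
    ⟨g / (2 * (1 + C)), by positivity, by field_simp⟩
  have hεg' : 2 * ε < g := by nlinarith
  set y := j + ε
  have hxy : x < y := by linarith
  have hdist : dist y x = y - x := by rw [Real.dist_eq, abs_of_pos (sub_pos.mpr hxy)]
  refine ⟨y, ⟨by linarith [hx.1.1], by linarith⟩, hxy.ne', by linarith, ?_⟩
  rw [eq_empty_iff_forall_notMem]
  rintro t ⟨htb, htS⟩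
  have hr : (6 * (1 + C))⁻¹ * dist y x < ε := by
    rw [hdist, inv_mul_lt_iff₀ (by positivity)]
    linarith
  rw [mem_ball, Real.dist_eq, abs_lt] at htb
  refine not_inv_le_div_le_of_near_Jset hC hJ (by linarith) ?_ (htS.2 m hmN)
  calc (1 + C) * (t - j) < (1 + C) * (2 * ε) := by gcongr; linarith
    _ = g := by rw [← hεg]; ring

theorem ratioBoundedSet_porous {C : ℝ} (hC : 0 < C) (N : ℕ) : Porous (ratioBoundedSet C N) :=
  ⟨_, by positivity, inv_lt_one_of_one_lt₀ (by linarith), fun x hx δ hδ =>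
    (ratioBoundedSet_hole hC N x hx δ hδ).imp fun _ hy => hy.2⟩

theorem ratioBoundedSet_porous_Icc {C : ℝ} (hC : 0 < C) (N : ℕ) :
    Porous (((↑) : Icc (0 : ℝ) 1 → ℝ) ⁻¹' ratioBoundedSet C N) :=
  porous_preimage_val (by positivity) (inv_lt_one_of_one_lt₀ (by linarith))
    (ratioBoundedSet_hole hC N)

/-- The set `S` is σ-porous in the interval `I = [0,1]` with the Euclidean metric; in
particular it is meager and has Lebesgue measure zero. -/
theorem stmt6 :
    SigmaPorous {t : Set.Icc (0 : ℝ) 1 | Scond (t : ℝ)} ∧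
    IsMeagre {t : Set.Icc (0 : ℝ) 1 | Scond (t : ℝ)} ∧
    MeasureTheory.volume {t : ℝ | Scond t} = 0 := by
  have hC (k : ℕ) : (0 : ℝ) < k + 1 := k.cast_add_one_pos
  have hsigma : SigmaPorous {t : Set.Icc (0 : ℝ) 1 | Scond (t : ℝ)} := by
    change SigmaPorous (((↑) : Icc (0 : ℝ) 1 → ℝ) ⁻¹' {t | Scond t})
    rw [setOf_Scond_eq_iUnion, preimage_iUnion]
    exact sigmaPorous_iUnion fun p => ratioBoundedSet_porous_Icc (hC p.1) p.2
  refine ⟨hsigma, hsigma.isMeagre, ?_⟩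
  rw [setOf_Scond_eq_iUnion]
  exact measure_iUnion_null fun p => (ratioBoundedSet_porous (hC p.1) p.2).volume_eq_zero
end
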